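/- Let q1 = (√κ − n^{1/4})/(√κ + n^{1/4}) and x* ∈ ℝ^d be the minimizer of F, whose ((i−1)p+j)-th coordinate equals q1^j, and set B = ‖x*‖₂. Let K_1,…,K_n be nonnegative integers with K = ∑_{i=1}^n K_i satisfying 2K ≤ np. Then for every x ∈ ℝ^d such that, for each i and each j > K_i, the coordinate x_{(i−1)p+j} = 0, it holds that F(x) − F(x*) ≥ (B²μ/4)·q1^{2K/n}. -/
import Mathlib


open Finset
open scoped RealInnerProductSpace

/-- The `p × p` tridiagonal matrix with diagonal entries `2` except the last one, which is `ξ`,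
and `-1` on the sub- and super-diagonal. -/
noncomputable def Tmat (p : ℕ) (ξ : ℝ) : Matrix (Fin p) (Fin p) ℝ :=
  fun j k =>
    if j = k then (if (j : ℕ) = p - 1 then ξ else 2)
    else if (j : ℕ) + 1 = (k : ℕ) ∨ (k : ℕ) + 1 = (j : ℕ) then -1 else 0

/-- The `d × d` matrix (`d = np`, coordinates indexed by `Fin n × Fin p`) which is zero outside
the `i`-th diagonal `p × p` block, and whose `i`-th diagonal block is `Tmat p ξ`. -/
noncomputable def Amat (n p : ℕ) (ξ : ℝ) (i : Fin n) :
    Matrix (Fin n × Fin p) (Fin n × Fin p) ℝ :=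
  fun a b => if a.1 = i ∧ b.1 = i then Tmat p ξ a.2 b.2 else 0

/-- The `d × d` diagonal matrix which is the orthogonal projection onto the coordinates
of the `i`-th block of `p` coordinates. -/
noncomputable def Bmat (n p : ℕ) (i : Fin n) :
    Matrix (Fin n × Fin p) (Fin n × Fin p) ℝ :=
  fun a b => if a = b ∧ a.1 = i then 1 else 0

/-- The component function
`f_i(x) = ((√n L − nμ)/4) ((1/2)⟨x, A_i x⟩ − ⟨e_{(i−1)p+1}, x⟩) + (nμ/2)⟨x, B_i x⟩`. -/
noncomputable def fComp2 (n p : ℕ) [NeZero p] (L μ ξ : ℝ) (i : Fin n)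
    (x : EuclideanSpace ℝ (Fin n × Fin p)) : ℝ :=
  ((Real.sqrt n * L - n * μ) / 4) *
      ((1 / 2) * (∑ a : Fin n × Fin p, ∑ b : Fin n × Fin p, x a * Amat n p ξ i a b * x b)
        - x (i, 0)) +
    (n * μ / 2) * (∑ a : Fin n × Fin p, ∑ b : Fin n × Fin p, x a * Bmat n p i a b * x b)


noncomputable def cT (p : ℕ) (ξ : ℝ) (u v : Fin p → ℝ) : ℝ :=
  ∑ a, ∑ b, u a * Tmat p ξ a b * v b

lemma Tmat_split (p : ℕ) (ξ : ℝ) (a b : Fin p) :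
    Tmat p ξ a b = (if a = b then (if (a:ℕ) = p - 1 then ξ else 2) else 0)
      + ((if (a:ℕ) + 1 = (b:ℕ) then (-1:ℝ) else 0) + (if (b:ℕ) + 1 = (a:ℕ) then (-1:ℝ) else 0)) := by
  rcases eq_or_ne a b with rfl | h
  · simp [Tmat]
  · have h' : (a:ℕ) ≠ (b:ℕ) := fun hc => h (Fin.ext hc)
    simp only [Tmat, if_neg h]
    by_cases h1 : (a:ℕ)+1 = (b:ℕ) <;> by_cases h2 : (b:ℕ)+1 = (a:ℕ) <;>
      first
        | (exfalso; omega)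
        | simp_all

noncomputable def emb (p : ℕ) (v : Fin p → ℝ) : ℕ → ℝ :=
  fun j => if h : j < p then v ⟨j, h⟩ else 0

lemma emb_apply (p : ℕ) (v : Fin p → ℝ) (a : Fin p) : emb p v a = v a := by
  simp [emb, a.2]

lemma cross_sum (p : ℕ) (u v : Fin p → ℝ) :
    (∑ a : Fin p, ∑ b : Fin p, u a * (if (a:ℕ) + 1 = (b:ℕ) then (-1:ℝ) else 0) * v b)
      = -∑ j ∈ Finset.range p, emb p u j * emb p v (j+1) := by
  rw [← Fin.sum_univ_eq_sum_range (fun j => emb p u j * emb p v (j+1)) p, ← Finset.sum_neg_distrib]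
  refine Finset.sum_congr rfl fun a _ => ?_
  by_cases h : (a:ℕ) + 1 < p
  · have hb : ∀ b : Fin p, ((a:ℕ) + 1 = (b:ℕ)) ↔ b = ⟨(a:ℕ)+1, h⟩ := by
      intro b; rw [Fin.ext_iff]; exact eq_comm
    simp only [hb, mul_ite, ite_mul, mul_zero, zero_mul, mul_neg_one]
    rw [Finset.sum_ite_eq' Finset.univ (⟨(a:ℕ)+1, h⟩ : Fin p) (fun b => -u a * v b)]
    simp [emb_apply, emb, h]
  · rw [Finset.sum_eq_zero]
    · have : emb p v ((a:ℕ)+1) = 0 := by simp [emb, h]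
      simp [this]
    · intro b _
      have : ¬((a:ℕ)+1 = (b:ℕ)) := by have := b.2; omega
      simp [this]

lemma diag_sum (p : ℕ) (ξ : ℝ) (u v : Fin p → ℝ) :
    (∑ a : Fin p, ∑ b : Fin p, u a * (if a = b then (if (a:ℕ) = p - 1 then ξ else 2) else 0) * v b)
      = ∑ j ∈ Finset.range p, (if j = p - 1 then ξ else 2) * (emb p u j * emb p v j) := by
  rw [← Fin.sum_univ_eq_sum_range (fun j => (if j = p - 1 then ξ else 2) * (emb p u j * emb p v j)) p]
  refine Finset.sum_congr rfl fun a _ => ?_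
  have : ∀ b : Fin p, u a * (if a = b then (if (a:ℕ) = p - 1 then ξ else 2) else 0) * v b
      = if b = a then u a * (if (a:ℕ) = p - 1 then ξ else 2) * v b else 0 := by
    intro b; rcases eq_or_ne a b with rfl | hne
    · simp
    · simp [hne, hne.symm]
  simp only [this]
  rw [Finset.sum_ite_eq' Finset.univ a (fun b => u a * (if (a:ℕ) = p - 1 then ξ else 2) * v b)]
  simp [emb_apply]; ring

lemma cT_eq (p : ℕ) (ξ : ℝ) (u v : Fin p → ℝ) :
    cT p ξ u v = ∑ j ∈ Finset.range p, (if j = p - 1 then ξ else 2) * (emb p u j * emb p v j)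
      - ∑ j ∈ Finset.range p, emb p u j * emb p v (j+1)
      - ∑ j ∈ Finset.range p, emb p v j * emb p u (j+1) := by
  have key : ∀ a b : Fin p, u a * Tmat p ξ a b * v b
      = u a * (if a = b then (if (a:ℕ) = p - 1 then ξ else 2) else 0) * v b
        + (u a * (if (a:ℕ) + 1 = (b:ℕ) then (-1:ℝ) else 0) * v b
          + v b * (if (b:ℕ) + 1 = (a:ℕ) then (-1:ℝ) else 0) * u a) := by
    intro a b; rw [Tmat_split]; ring
  simp only [cT, key, Finset.sum_add_distrib]
  rw [diag_sum, cross_sum, Finset.sum_comm, cross_sum p v u]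
  ring

lemma cT_self_nonneg (p : ℕ) (hp : 1 ≤ p) (ξ : ℝ) (hξ : 1 ≤ ξ) (v : Fin p → ℝ) :
    0 ≤ cT p ξ v v := by
  obtain ⟨q, rfl⟩ : ∃ q, p = q + 1 := ⟨p - 1, (Nat.succ_pred_eq_of_pos hp).symm⟩
  rw [cT_eq]
  set w := emb (q+1) v with hw
  have hwp : w (q+1) = 0 := by simp [hw, emb]
  have hS : ∑ j ∈ Finset.range (q+1), w j * w (j+1) = ∑ j ∈ Finset.range q, w j * w (j+1) := by
    rw [Finset.sum_range_succ, hwp, mul_zero, add_zero]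
  have hD : ∑ j ∈ Finset.range (q+1), (if j = q+1-1 then ξ else 2) * (w j * w j)
      = (∑ j ∈ Finset.range q, w j * w j) + (∑ j ∈ Finset.range q, w j * w j)
        + ξ * (w q * w q) := by
    rw [Finset.sum_range_succ]
    have e1 : ∀ j ∈ Finset.range q, (if j = q+1-1 then ξ else 2) * (w j * w j)
        = w j * w j + w j * w j := by
      intro j hj
      rw [Nat.add_sub_cancel, if_neg (Nat.ne_of_lt (Finset.mem_range.mp hj))]; ring
    rw [Finset.sum_congr rfl e1, Finset.sum_add_distrib]
    simp [Nat.add_sub_cancel]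
  have h2 : 2 * ∑ j ∈ Finset.range q, w j * w (j+1)
      ≤ ∑ j ∈ Finset.range q, w j * w j + ∑ j ∈ Finset.range q, w (j+1) * w (j+1) := by
    rw [Finset.mul_sum, ← Finset.sum_add_distrib]
    refine Finset.sum_le_sum fun j _ => ?_
    nlinarith [sq_nonneg (w j - w (j+1))]
  have h3 : ∑ j ∈ Finset.range q, w (j+1) * w (j+1)
      = ∑ j ∈ Finset.range (q+1), w j * w j - w 0 * w 0 := by
    rw [Finset.sum_range_succ' (fun j => w j * w j) q]; ring
  have h4 : ∑ j ∈ Finset.range (q+1), w j * w j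
      = ∑ j ∈ Finset.range q, w j * w j + w q * w q :=
    Finset.sum_range_succ _ q
  nlinarith [mul_self_nonneg (w 0), mul_self_nonneg (w q)]

lemma cT_quad (p : ℕ) (ξ t : ℝ) (u y : Fin p → ℝ) :
    cT p ξ (fun j => u j + t * y j) (fun j => u j + t * y j)
      = cT p ξ u u + t * (cT p ξ u y + cT p ξ y u) + t^2 * cT p ξ y y := by
  simp only [cT, mul_add, Finset.mul_sum, ← Finset.sum_add_distrib]
  refine Finset.sum_congr rfl fun a _ => ?_
  refine Finset.sum_congr rfl fun b _ => ?_
  ring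


lemma sum_quad {ι : Type*} [Fintype ι] (t : ℝ) (u y : ι → ℝ) :
    ∑ j, (u j + t * y j) * (u j + t * y j)
      = ∑ j, u j * u j + t * (2 * ∑ j, u j * y j) + t^2 * ∑ j, y j * y j := by
  simp only [Finset.mul_sum, ← Finset.sum_add_distrib]
  exact Finset.sum_congr rfl fun j _ => by ring

lemma lin_eq_zero (c q : ℝ) (h : ∀ t : ℝ, 0 ≤ t * c + t^2/2 * q) : c = 0 := by
  by_contra hc
  have hc2 : 0 < c^2 := by positivity
  set s : ℝ := 1/(|q|+1) with hs
  have hs0 : 0 < s := by positivity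
  have h1 := h (-(c*s))
  have hq : s * q < 1 := by
    calc s * q ≤ s * |q| := by
          exact mul_le_mul_of_nonneg_left (le_abs_self q) hs0.le
      _ = |q|/(|q|+1) := by rw [hs]; ring
      _ < 1 := by rw [div_lt_one (by positivity)]; linarith [abs_nonneg q]
  nlinarith [mul_pos hc2 hs0, mul_pos (mul_pos hc2 hs0) hs0]

lemma geom_tail (r : ℝ) (hr0 : 0 < r) (hr1 : r < 1) (k p : ℕ) :
    (r^(k+1) - r^(p+1))/(1-r) ≤ ∑ j ∈ Finset.range p, if k ≤ j then r^(j+1) else 0 := by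
  have hne : r ≠ 1 := ne_of_lt hr1
  by_cases hkp : k ≤ p
  · have hfil : ∑ j ∈ Finset.range p, (if k ≤ j then r^(j+1) else 0)
        = ∑ j ∈ Finset.Ico k p, r^(j+1) := by
      rw [← Finset.sum_filter]
      congr 1
      ext j; simp; omega
    have : ∑ j ∈ Finset.Ico k p, r^(j+1) = r * ((r^p - r^k)/(r-1)) := by
      rw [← geom_sum_Ico hne hkp, Finset.mul_sum]
      exact Finset.sum_congr rfl fun j _ => by ring
    rw [hfil, this]
    have h1 : r - 1 ≠ 0 := by intro h; apply hne; linarith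
    have h2 : (1:ℝ) - r ≠ 0 := by intro h; apply hne; linarith
    apply le_of_eq
    field_simp
    ring
  · push_neg at hkp
    have h0 : ∑ j ∈ Finset.range p, (if k ≤ j then r^(j+1) else 0) = 0 :=
      Finset.sum_eq_zero fun j hj => by
        rw [if_neg]; have := Finset.mem_range.mp hj; omega
    rw [h0]
    apply div_nonpos_of_nonpos_of_nonneg ?_ (by linarith)
    have : r^(k+1) ≤ r^(p+1) :=
      pow_le_pow_of_le_one hr0.le hr1.le (by omega)
    linarith

lemma amgm_pow (n : ℕ) (hn : 0 < n) (r : ℝ) (hr : 0 < r) (K : Fin n → ℕ) :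
    (n:ℝ) * r ^ (((∑ i, K i : ℕ) : ℝ)/(n:ℝ)) ≤ ∑ i, r ^ (K i) := by
  have hn' : (0:ℝ) < n := by exact_mod_cast hn
  have key := Real.geom_mean_le_arith_mean_weighted Finset.univ (fun _ => 1/(n:ℝ))
    (fun i => r ^ (K i)) (fun i _ => by positivity)
    (by simp [Finset.sum_const, Finset.card_univ]; field_simp)
    (fun i _ => by positivity)
  have hL : ∏ i : Fin n, (r ^ (K i)) ^ ((1:ℝ)/(n:ℝ))
      = r ^ (((∑ i, K i : ℕ) : ℝ)/(n:ℝ)) := by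
    have : ∀ i : Fin n, (r ^ (K i)) ^ ((1:ℝ)/(n:ℝ)) = r ^ (((K i : ℝ)) * (1/(n:ℝ))) := by
      intro i
      rw [← Real.rpow_natCast r (K i), ← Real.rpow_mul hr.le]
    rw [Finset.prod_congr rfl fun i _ => this i, ← Real.rpow_sum_of_pos hr,
      ← Finset.sum_mul]
    congr 1
    push_cast
    ring
  rw [hL] at key
  have hR : ∑ i : Fin n, (1/(n:ℝ)) * r ^ (K i) = (1/(n:ℝ)) * ∑ i, r ^ (K i) := by
    rw [Finset.mul_sum]
  rw [hR] at key
  rw [mul_comm]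
  calc r ^ (((∑ i, K i : ℕ) : ℝ)/(n:ℝ)) * n ≤ ((1/(n:ℝ)) * ∑ i, r ^ (K i)) * n := by
        exact mul_le_mul_of_nonneg_right key hn'.le
    _ = ∑ i, r ^ (K i) := by field_simp


lemma Amat_qf (n p : ℕ) (ξ : ℝ) (i : Fin n) (x : Fin n × Fin p → ℝ) :
    (∑ a : Fin n × Fin p, ∑ b : Fin n × Fin p, x a * Amat n p ξ i a b * x b)
      = cT p ξ (fun j => x (i,j)) (fun j => x (i,j)) := by
  rw [cT, Fintype.sum_prod_type]
  have key : ∀ (a1 : Fin n) (a2 : Fin p),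
      (∑ b : Fin n × Fin p, x (a1,a2) * Amat n p ξ i (a1,a2) b * x b)
      = if a1 = i then ∑ b2, x (i,a2) * Tmat p ξ a2 b2 * x (i,b2) else 0 := by
    intro a1 a2
    rw [Fintype.sum_prod_type]
    by_cases h : a1 = i
    · subst h
      rw [if_pos rfl]
      have e : ∀ b1 : Fin n,
          (∑ b2, x (a1,a2) * Amat n p ξ a1 (a1,a2) (b1,b2) * x (b1,b2))
          = if b1 = a1 then ∑ b2, x (a1,a2) * Tmat p ξ a2 b2 * x (a1,b2) else 0 := by
        intro b1
        by_cases hb : b1 = a1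
        · subst hb; simp [Amat]
        · simp [Amat, hb]
      rw [Finset.sum_congr rfl (fun b1 _ => e b1),
        Finset.sum_ite_eq' Finset.univ a1 (fun b1 => ∑ b2, x (a1,a2) * Tmat p ξ a2 b2 * x (a1,b2))]
      simp
    · rw [if_neg h]
      refine Finset.sum_eq_zero fun b1 _ => Finset.sum_eq_zero fun b2 _ => ?_
      simp [Amat, h]
  rw [Finset.sum_congr rfl (fun a1 _ => Finset.sum_congr rfl (fun a2 _ => key a1 a2))]
  rw [Finset.sum_comm]
  refine Finset.sum_congr rfl fun a2 _ => ?_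
  rw [Finset.sum_ite_eq' Finset.univ i (fun a1 => ∑ b2, x (i,a2) * Tmat p ξ a2 b2 * x (i,b2))]
  simp

lemma Bmat_qf (n p : ℕ) (i : Fin n) (x : Fin n × Fin p → ℝ) :
    (∑ a : Fin n × Fin p, ∑ b : Fin n × Fin p, x a * Bmat n p i a b * x b)
      = ∑ j : Fin p, x (i,j) * x (i,j) := by
  have key : ∀ a : Fin n × Fin p, (∑ b, x a * Bmat n p i a b * x b)
      = if a.1 = i then x a * x a else 0 := by
    intro a
    have e : ∀ b, x a * Bmat n p i a b * x b
        = if b = a then (if a.1 = i then x a * x b else 0) else 0 := by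
      intro b
      by_cases hb : b = a
      · subst hb; by_cases hi : b.1 = i <;> simp [Bmat, hi]
      · have hne : ¬(a = b ∧ a.1 = i) := fun hc => hb hc.1.symm
        simp [Bmat, hne, hb]
    rw [Finset.sum_congr rfl (fun b _ => e b),
      Finset.sum_ite_eq' Finset.univ a (fun b => if a.1 = i then x a * x b else 0)]
    simp
  rw [Finset.sum_congr rfl (fun a _ => key a), Fintype.sum_prod_type]
  have e2 : ∀ a1 : Fin n, (∑ a2 : Fin p, if a1 = i then x (a1,a2) * x (a1,a2) else 0)
      = if a1 = i then ∑ a2 : Fin p, x (i,a2) * x (i,a2) else 0 := by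
    intro a1
    by_cases h : a1 = i
    · subst h; simp
    · simp [h]
  rw [Finset.sum_congr rfl (fun a1 _ => e2 a1),
    Finset.sum_ite_eq' Finset.univ i (fun _ => ∑ a2 : Fin p, x (i,a2) * x (i,a2))]
  simp

lemma fComp2_eq (n p : ℕ) [NeZero p] (L μ ξ : ℝ) (i : Fin n)
    (x : EuclideanSpace ℝ (Fin n × Fin p)) :
    fComp2 n p L μ ξ i x
      = ((Real.sqrt n * L - n * μ) / 4) *
          ((1/2) * cT p ξ (fun j => x (i,j)) (fun j => x (i,j)) - x (i,0))
        + ((n:ℝ) * μ / 2) * ∑ j : Fin p, x (i,j) * x (i,j) := by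
  rw [fComp2, Amat_qf, Bmat_qf]

noncomputable def QUADf (n p : ℕ) [NeZero p] (μ ξ α : ℝ) (y : EuclideanSpace ℝ (Fin n × Fin p)) : ℝ :=
  (2/(n:ℝ)) * ∑ i, (α/2 * cT p ξ (fun j => y (i,j)) (fun j => y (i,j))
    + ((n:ℝ)*μ/2) * ∑ j : Fin p, y (i,j) * y (i,j))

noncomputable def LINf (n p : ℕ) [NeZero p] (μ ξ α : ℝ) (u y : EuclideanSpace ℝ (Fin n × Fin p)) : ℝ :=
  (1/(n:ℝ)) * ∑ i, (α/2 * (cT p ξ (fun j => u (i,j)) (fun j => y (i,j))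
      + cT p ξ (fun j => y (i,j)) (fun j => u (i,j)))
    - α * y (i,0) + (n:ℝ)*μ*∑ j : Fin p, u (i,j) * y (i,j))

lemma master (n p : ℕ) [NeZero p] (L μ ξ α : ℝ)
    (hα : α = (Real.sqrt n * L - n * μ) / 4)
    (u y : EuclideanSpace ℝ (Fin n × Fin p)) (t : ℝ) :
    (1/(n:ℝ)) * ∑ i, fComp2 n p L μ ξ i (u + t • y)
      = (1/(n:ℝ)) * ∑ i, fComp2 n p L μ ξ i u
        + t * LINf n p μ ξ α u y + t^2/2 * QUADf n p μ ξ α y := by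
  have happ : ∀ a : Fin n × Fin p, (u + t • y) a = u a + t * y a := fun a => by
    simp [PiLp.add_apply, PiLp.smul_apply]
  have hper : ∀ i, fComp2 n p L μ ξ i (u + t • y)
      = fComp2 n p L μ ξ i u
        + t * (α/2 * (cT p ξ (fun j => u (i,j)) (fun j => y (i,j))
            + cT p ξ (fun j => y (i,j)) (fun j => u (i,j)))
          - α * y (i,0) + (n:ℝ)*μ*∑ j : Fin p, u (i,j) * y (i,j))
        + t^2 * (α/2 * cT p ξ (fun j => y (i,j)) (fun j => y (i,j))
          + ((n:ℝ)*μ/2) * ∑ j : Fin p, y (i,j) * y (i,j)) := by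
    intro i
    rw [fComp2_eq, fComp2_eq]
    simp only [happ]
    rw [cT_quad, sum_quad, ← hα]
    ring
  rw [Finset.sum_congr rfl fun i _ => hper i, Finset.sum_add_distrib, Finset.sum_add_distrib,
    ← Finset.mul_sum, ← Finset.mul_sum]
  simp only [LINf, QUADf]
  ring


lemma rpow_amgm (r P : ℝ) (hr0 : 0 < r) : 2 * r^((P+2)/2) ≤ r + r^(P+1) := by
  have e1 : r ^ ((1:ℝ)/2) * r ^ ((1:ℝ)/2) = r := by
    rw [← Real.rpow_add hr0]; norm_num
  have e2 : r ^ ((P+1)/2) * r ^ ((P+1)/2) = r ^ (P+1) := by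
    rw [← Real.rpow_add hr0]; congr 1; ring
  have e3 : r ^ ((1:ℝ)/2) * r ^ ((P+1)/2) = r ^ ((P+2)/2) := by
    rw [← Real.rpow_add hr0]; congr 1; ring
  nlinarith [sq_nonneg (r^((1:ℝ)/2) - r^((P+1)/2))]

lemma key_bound (r aa P : ℝ) (hr0 : 0 < r) (hb : r^(P/2) ≤ aa) :
    2 * r^(P+1) ≤ aa * (r + r^(P+1)) := by
  have e4 : r ^ (P/2) * r ^ ((P+2)/2) = r ^ (P+1) := by
    rw [← Real.rpow_add hr0]; congr 1; ring
  have hge := rpow_amgm r P hr0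
  calc (2:ℝ) * r^(P+1) = r ^ (P/2) * (2 * r^((P+2)/2)) := by
        rw [← e4]; ring
    _ ≤ aa * (2 * r^((P+2)/2)) := by
        apply mul_le_mul_of_nonneg_right hb
        positivity
    _ ≤ aa * (r + r^(P+1)) := by
        apply mul_le_mul_of_nonneg_left hge ?_
        exact le_trans (Real.rpow_nonneg hr0.le _) hb

lemma final_num (n μ r aa rp1 : ℝ) (hn0 : 0 < n) (hμ : 0 ≤ μ)
    (hkey : 2*rp1 ≤ aa*(r+rp1)) :
    n * (r - rp1) * μ / 4 * aa ≤ μ/2 * (r*(n*aa) - n*rp1) := by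
  have h9 : 0 ≤ (n*μ/4) * (aa*(r+rp1) - 2*rp1) :=
    mul_nonneg (by positivity) (by linarith)
  nlinarith [h9]



set_option maxHeartbeats 2000000 in
/-- Case (2) function-value lower bound: under the support pattern produced by `K_i` queries
to `∇f_i` and `2K ≤ np`, `F(x) − F(x*) ≥ (B²μ/4) q1^{2K/n}` with `B = ‖x*‖`. -/
theorem stmt12 (n p : ℕ) (hn : 2 ≤ n) [NeZero p] (hp : 1 ≤ p)
    (L μ κ ξ q1 : ℝ) (hμ : 0 < μ) (hL : 0 < L) (hκ : κ = L / μ) (hκn : Real.sqrt n < κ)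
    (hξ : ξ = (Real.sqrt κ + 3 * (n : ℝ) ^ ((1 : ℝ) / 4)) /
        (Real.sqrt κ + (n : ℝ) ^ ((1 : ℝ) / 4)))
    (hq1 : q1 = (Real.sqrt κ - (n : ℝ) ^ ((1 : ℝ) / 4)) /
        (Real.sqrt κ + (n : ℝ) ^ ((1 : ℝ) / 4)))
    (F : EuclideanSpace ℝ (Fin n × Fin p) → ℝ)
    (hF : F = fun x => (1 / (n : ℝ)) * ∑ i : Fin n, fComp2 n p L μ ξ i x)
    (xstar : EuclideanSpace ℝ (Fin n × Fin p))
    (hxstar : ∀ (i : Fin n) (j : Fin p), xstar (i, j) = q1 ^ ((j : ℕ) + 1))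
    (hmin : ∀ y : EuclideanSpace ℝ (Fin n × Fin p), F xstar ≤ F y)
    (B : ℝ) (hB : B = ‖xstar‖)
    (K : Fin n → ℕ) (hK : 2 * ∑ i, K i ≤ n * p) :
    ∀ x : EuclideanSpace ℝ (Fin n × Fin p),
      (∀ (i : Fin n) (j : Fin p), K i < (j : ℕ) + 1 → x (i, j) = 0) →
      F x - F xstar ≥ (B ^ 2 * μ / 4) * q1 ^ ((2 * ((∑ i, K i : ℕ) : ℝ)) / n) := by
  intro x hx
  classical
  -- basic numerics
  have hn0 : (0:ℝ) < n := by
    have : (0:ℕ) < n := by omega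
    exact_mod_cast this
  set α : ℝ := (Real.sqrt n * L - n * μ) / 4 with hα
  set m : ℝ := (n:ℝ) ^ ((1:ℝ)/4) with hm
  have hm0 : 0 < m := Real.rpow_pos_of_pos hn0 _
  have hsn : 0 < Real.sqrt n := Real.sqrt_pos.mpr hn0
  have hκ0 : 0 < κ := lt_trans hsn hκn
  have hs0 : 0 < Real.sqrt κ := Real.sqrt_pos.mpr hκ0
  have hms : m < Real.sqrt κ := by
    have h1 : Real.sqrt (Real.sqrt n) < Real.sqrt κ :=
      Real.sqrt_lt_sqrt (Real.sqrt_nonneg _) hκn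
    have h2 : Real.sqrt (Real.sqrt n) = m := by
      rw [hm, Real.sqrt_eq_rpow, Real.sqrt_eq_rpow,
        ← Real.rpow_mul (Nat.cast_nonneg n)]
      norm_num
    rwa [h2] at h1
  have hq1pos : 0 < q1 := by
    rw [hq1]; exact div_pos (by linarith) (by linarith)
  have hq1lt : q1 < 1 := by
    rw [hq1, div_lt_one (by linarith)]; linarith
  have hξ1 : 1 ≤ ξ := by
    rw [hξ, le_div_iff₀ (by linarith)]; linarith
  have hα0 : 0 ≤ α := by
    have hL' : L = κ * μ := by rw [hκ]; field_simp
    have hss : Real.sqrt n * Real.sqrt n = n := Real.mul_self_sqrt hn0.le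
    have h1 : (n:ℝ) * μ ≤ Real.sqrt n * (κ * μ) := by
      nlinarith [mul_pos (sub_pos.mpr hκn) (mul_pos hsn hμ)]
    rw [hα, hL']
    linarith
  set r : ℝ := q1^2 with hr
  have hr0 : 0 < r := by positivity
  have hr1 : r < 1 := by rw [hr]; nlinarith
  have h1r : (0:ℝ) < 1 - r := by linarith
  -- master identity / minimizer
  have hFmaster : ∀ (y : EuclideanSpace ℝ (Fin n × Fin p)) (t : ℝ),
      F (xstar + t • y) = F xstar + t * LINf n p μ ξ α xstar y + t^2/2 * QUADf n p μ ξ α y := by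
    intro y t
    simp only [hF]
    exact master n p L μ ξ α hα xstar y t
  have hlin : ∀ y, LINf n p μ ξ α xstar y = 0 := by
    intro y
    apply lin_eq_zero _ (QUADf n p μ ξ α y)
    intro t
    have h1 := hmin (xstar + t • y)
    rw [hFmaster y t] at h1
    linarith
  set y : EuclideanSpace ℝ (Fin n × Fin p) := x - xstar with hy
  have hq : F x - F xstar = 1/2 * QUADf n p μ ξ α y := by
    have hxy' : xstar + (1:ℝ) • y = x := by rw [one_smul, hy]; abel
    have h1 := hFmaster y 1
    rw [hxy', hlin y] at h1
    rw [h1]; ring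
  -- quadratic lower bound
  have hQl : μ * ∑ i, ∑ j : Fin p, y (i,j) * y (i,j) ≤ QUADf n p μ ξ α y := by
    simp only [QUADf]
    have e : μ * ∑ i, ∑ j : Fin p, y (i,j) * y (i,j)
        = (2/(n:ℝ)) * ∑ i, ((n:ℝ)*μ/2) * ∑ j : Fin p, y (i,j) * y (i,j) := by
      rw [Finset.mul_sum, Finset.mul_sum]
      refine Finset.sum_congr rfl fun i _ => ?_
      field_simp
    rw [e]
    apply mul_le_mul_of_nonneg_left ?_ (by positivity)
    refine Finset.sum_le_sum fun i _ => ?_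
    have h1 := cT_self_nonneg p hp ξ hξ1 (fun j => y (i,j))
    nlinarith
  -- coordinate lower bound
  have hyij : ∀ (i : Fin n) (j : Fin p), y (i,j) = x (i,j) - q1^((j:ℕ)+1) := by
    intro i j
    rw [hy, PiLp.sub_apply, hxstar]
  have hcoord : ∑ i, (∑ j ∈ Finset.range p, if K i ≤ j then r^(j+1) else 0)
      ≤ ∑ i, ∑ j : Fin p, y (i,j) * y (i,j) := by
    refine Finset.sum_le_sum fun i _ => ?_
    rw [← Fin.sum_univ_eq_sum_range (fun j => if K i ≤ j then r^(j+1) else 0) p]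
    refine Finset.sum_le_sum fun j _ => ?_
    by_cases hj : K i ≤ (j:ℕ)
    · rw [if_pos hj, hyij, hx i j (by omega)]
      apply le_of_eq
      rw [zero_sub, neg_mul_neg, ← pow_add, hr, ← pow_mul]
      congr 1
      ring
    · rw [if_neg hj]
      exact mul_self_nonneg _
  have htail : ∑ i, (r^(K i + 1) - r^(p+1))/(1-r)
      ≤ ∑ i, (∑ j ∈ Finset.range p, if K i ≤ j then r^(j+1) else 0) :=
    Finset.sum_le_sum fun i _ => geom_tail r hr0 hr1 (K i) p
  set Kr : ℝ := ((∑ i, K i : ℕ) : ℝ) with hKr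
  set a : ℝ := r ^ (Kr/(n:ℝ)) with ha
  have ha0 : 0 < a := Real.rpow_pos_of_pos hr0 _
  have hamgm : (n:ℝ) * a ≤ ∑ i, r ^ (K i) := by
    rw [ha, hKr]
    exact amgm_pow n (by omega) r hr0 K
  have hsum1 : ∑ i, (r^(K i + 1) - r^(p+1))/(1-r)
      = (r * ∑ i, r^(K i) - (n:ℝ) * r^(p+1))/(1-r) := by
    rw [← Finset.sum_div]
    congr 1
    rw [Finset.sum_sub_distrib, Finset.sum_const, Finset.card_univ, Fintype.card_fin,
      nsmul_eq_mul, Finset.mul_sum]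
    congr 1
    exact Finset.sum_congr rfl fun i _ => by rw [pow_succ]; ring
  -- rpow facts
  have hep : r^((p:ℝ)+1) = r^(p+1) := by
    rw [← Real.rpow_natCast r (p+1)]
    congr 1
    push_cast; ring
  have hKn2 : Kr/(n:ℝ) ≤ (p:ℝ)/2 := by
    have : (2:ℝ) * Kr ≤ (n:ℝ) * p := by
      rw [hKr]; exact_mod_cast hK
    rw [div_le_div_iff₀ hn0 (by norm_num)]
    linarith
  have hb : r ^ ((p:ℝ)/2) ≤ a := Real.rpow_le_rpow_of_exponent_ge hr0 hr1.le hKn2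
  have hkey : 2 * r^(p+1) ≤ a * (r + r^(p+1)) := by
    have := key_bound r a (p:ℝ) hr0 hb
    rwa [hep] at this
  -- B^2
  have hB2 : B^2 = (n:ℝ) * ((r - r^(p+1))/(1-r)) := by
    have hnorm : B^2 = ∑ a : Fin n × Fin p, (xstar a)^2 := by
      rw [hB, EuclideanSpace.norm_eq,
        Real.sq_sqrt (Finset.sum_nonneg fun _ _ => sq_nonneg _)]
      exact Finset.sum_congr rfl fun a _ => by rw [Real.norm_eq_abs, sq_abs]
    have e1 : ∀ i : Fin n, (∑ j : Fin p, (xstar (i,j))^2) = ∑ j ∈ Finset.range p, r^(j+1) := by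
      intro i
      rw [← Fin.sum_univ_eq_sum_range (fun j => r^(j+1)) p]
      refine Finset.sum_congr rfl fun j _ => ?_
      rw [hxstar, hr, ← pow_mul, ← pow_mul]
      congr 1
      ring
    have hgeo : ∑ j ∈ Finset.range p, r^(j+1) = (r - r^(p+1))/(1-r) := by
      have hgs := geom_sum_eq (ne_of_lt hr1) p
      have e2 : ∑ j ∈ Finset.range p, r^(j+1) = (∑ j ∈ Finset.range p, r^j) * r := by
        rw [Finset.sum_mul]
        exact Finset.sum_congr rfl fun j _ => pow_succ r j
      have hne1 : r - 1 ≠ 0 := sub_ne_zero.mpr (ne_of_lt hr1)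
      have hne2 : (1:ℝ) - r ≠ 0 := sub_ne_zero.mpr (ne_of_gt hr1)
      rw [e2, hgs]
      field_simp
      ring
    rw [hnorm, Fintype.sum_prod_type]
    rw [Finset.sum_congr rfl fun i (_ : i ∈ Finset.univ) => e1 i]
    rw [Finset.sum_const, Finset.card_univ, Fintype.card_fin, nsmul_eq_mul, hgeo]
  -- exponent identification
  have hexp : q1 ^ ((2 * Kr)/(n:ℝ)) = a := by
    rw [ha, hr, ← Real.rpow_natCast q1 2, ← Real.rpow_mul hq1pos.le]
    congr 1
    push_cast
    ring
  rw [ge_iff_le, hexp, hB2, hq]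
  -- final chain
  set G : ℝ := ∑ i, ∑ j : Fin p, y (i,j) * y (i,j) with hG
  have hG1 : (r * ((n:ℝ) * a) - (n:ℝ) * r^(p+1))/(1-r) ≤ G := by
    refine le_trans ?_ (le_trans htail hcoord)
    rw [hsum1, div_eq_mul_inv, div_eq_mul_inv]
    refine mul_le_mul_of_nonneg_right ?_ (inv_nonneg.mpr h1r.le)
    have := mul_le_mul_of_nonneg_left hamgm hr0.le
    linarith
  have hfin : (n:ℝ) * ((r - r^(p+1))/(1-r)) * μ / 4 * a
      ≤ μ/2 * ((r * ((n:ℝ) * a) - (n:ℝ) * r^(p+1))/(1-r)) := by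
    have eL : (n:ℝ) * ((r - r^(p+1))/(1-r)) * μ / 4 * a
        = ((n:ℝ) * (r - r^(p+1)) * μ / 4 * a) * (1-r)⁻¹ := by ring
    have eR : μ/2 * ((r * ((n:ℝ) * a) - (n:ℝ) * r^(p+1))/(1-r))
        = (μ/2 * (r * ((n:ℝ) * a) - (n:ℝ) * r^(p+1))) * (1-r)⁻¹ := by ring
    rw [eL, eR]
    refine mul_le_mul_of_nonneg_right ?_ (inv_nonneg.mpr h1r.le)
    exact final_num (n:ℝ) μ r a (r^(p+1)) hn0 hμ.le hkey
  have hQG : μ/2 * G ≤ 1/2 * QUADf n p μ ξ α y := by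
    linarith only [hQl]
  have hmono : μ/2 * ((r * ((n:ℝ) * a) - (n:ℝ) * r^(p+1))/(1-r)) ≤ μ/2 * G :=
    mul_le_mul_of_nonneg_left hG1 (le_of_lt (by linarith only [hμ] : (0:ℝ) < μ/2))
  linarith only [hq, hfin, hmono, hQG]
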